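/- Let T be a commuting row contraction on H whose characteristic function is a polynomial, i.e., there exists m ∈ ℕ with θ_{T,β} = 0 for all β ∈ ℕ^n with |β| > m. Then T is pure — meaning lim_{k→∞} ∑_{α ∈ ℕ^n, |α| = k} γ_α ‖T^{*α} h‖² = 0 for every h ∈ H — if and only if H_c = {0}, where H_c := {h ∈ H : ∑_{|α|=k} γ_α ‖T^{*α} h‖² = ‖h‖² for all k ∈ ℕ}. -/

import Mathlib

open scoped InnerProductSpace

set_option maxHeartbeats 1000000
set_option synthInstance.maxHeartbeats 400000

noncomputable section

namespace RowContr

instance {n : ℕ} {H : Type*} [NormedAddCommGroup H] [CompleteSpace H] :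
    CompleteSpace (PiLp 2 fun _ : Fin n => H) :=
  inferInstance

/-- Ordered product `T^α = T 0 ^ α 0 ⬝ ⋯ ⬝ T (n-1) ^ α (n-1)`
(for commuting tuples the order is immaterial). -/
def mpow {n : ℕ} {H : Type*} [NormedAddCommGroup H] [InnerProductSpace ℂ H]
    (T : Fin n → H →L[ℂ] H) (α : Fin n → ℕ) : H →L[ℂ] H :=
  (List.ofFn fun i => (T i) ^ (α i)).prod

/-- The finset of all multi-indices `α : Fin n → ℕ` with `|α| = k`. -/
def multiIdx (n k : ℕ) : Finset (Fin n → ℕ) :=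
  (Fintype.piFinset fun _ : Fin n => Finset.range (k + 1)).filter fun α => ∑ i, α i = k

/-- The row operator `E^n → F` associated with a tuple of operators, acting on the
Hilbert direct sum `PiLp 2`. -/
def rowOp {n : ℕ} {E F : Type*} [NormedAddCommGroup E] [InnerProductSpace ℂ E]
    [NormedAddCommGroup F] [InnerProductSpace ℂ F]
    (T : Fin n → E →L[ℂ] F) : PiLp 2 (fun _ : Fin n => E) →L[ℂ] F :=
  ∑ i, (T i).comp (PiLp.proj 2 (fun _ : Fin n => E) i)

/-- The `α`-th Taylor coefficient of the characteristic function of `T`, where `Dstar`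
plays the role of the defect operator `D_{T*}` and `D` the role of `D_T`:
`θ_{T,α} = ∑_{j : α_j ≥ 1} γ_{α-e_j} • D_{T*} T^{*(α-e_j)} P_j D_T`. -/
def charCoeff {n : ℕ} {H : Type*} [NormedAddCommGroup H] [InnerProductSpace ℂ H]
    [CompleteSpace H] (T : Fin n → H →L[ℂ] H) (Dstar : H →L[ℂ] H)
    (D : PiLp 2 (fun _ : Fin n => H) →L[ℂ] PiLp 2 (fun _ : Fin n => H))
    (α : Fin n → ℕ) : PiLp 2 (fun _ : Fin n => H) →L[ℂ] H :=
  ∑ j ∈ Finset.univ.filter (fun j => 0 < α j),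
    (Nat.multinomial Finset.univ (α - Pi.single j 1) : ℂ) •
      (Dstar ∘L (star (mpow T (α - Pi.single j 1))) ∘L (PiLp.proj 2 (fun _ : Fin n => H) j) ∘L D)

/-- The closure of the span of `{T^α D_{T*} h : h ∈ H, |α| ≥ m}`. -/
def rangeSpanGE {n : ℕ} {H : Type*} [NormedAddCommGroup H] [InnerProductSpace ℂ H]
    (T : Fin n → H →L[ℂ] H) (Dstar : H →L[ℂ] H) (m : ℕ) : Submodule ℂ H :=
  (Submodule.span ℂ
    {x : H | ∃ (α : Fin n → ℕ) (h : H), m ≤ ∑ i, α i ∧ x = mpow T α (Dstar h)}).topologicalClosure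

/-- The closure of the span of `{T^α D_{T*} h : h ∈ H, |α| = m}`. -/
def rangeSpanEQ {n : ℕ} {H : Type*} [NormedAddCommGroup H] [InnerProductSpace ℂ H]
    (T : Fin n → H →L[ℂ] H) (Dstar : H →L[ℂ] H) (m : ℕ) : Submodule ℂ H :=
  (Submodule.span ℂ
    {x : H | ∃ (α : Fin n → ℕ) (h : H), ∑ i, α i = m ∧ x = mpow T α (Dstar h)}).topologicalClosure

/-- The closure of the span of `{T^α D_{T*} h : h ∈ H, α ∈ ℕ^n}`. -/
def rangeSpanAll {n : ℕ} {H : Type*} [NormedAddCommGroup H] [InnerProductSpace ℂ H]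
    (T : Fin n → H →L[ℂ] H) (Dstar : H →L[ℂ] H) : Submodule ℂ H :=
  (Submodule.span ℂ
    {x : H | ∃ (α : Fin n → ℕ) (h : H), x = mpow T α (Dstar h)}).topologicalClosure

/-- The set `H_c = {h ∈ H : ∑_{|α| = k} γ_α ‖T^{*α} h‖² = ‖h‖² for all k ∈ ℕ}`. -/
def Hc {n : ℕ} {H : Type*} [NormedAddCommGroup H] [InnerProductSpace ℂ H] [CompleteSpace H]
    (T : Fin n → H →L[ℂ] H) : Set H :=
  {h : H | ∀ k : ℕ, ∑ α ∈ multiIdx n k,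
    (Nat.multinomial Finset.univ α : ℝ) * ‖star (mpow T α) h‖ ^ 2 = ‖h‖ ^ 2}

/-!
Write `f_k(h) = ∑_{|α|=k} γ_α ‖T^{*α} h‖²`. The Pascal rule `γ_β = ∑_{β_j ≥ 1} γ_{β-e_j}` and
`∑ T_j T_j^* = 1 - D_{T*}²` give `f_{k+1}(h) = f_k(h) - ∑_{|α|=k} γ_α ‖D_{T*} T^{*α} h‖²`, so
`f_k(h) ≤ ‖h‖²`, and `h ∈ H_c` as soon as `D_{T*} T^{*α} h = 0` for all `α`. In particular every
vector orthogonal to all `T^δ D_{T*} g` lies in `H_c`.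

Write `θ_{T,β} = C_β D_T`. If `θ_{T,β} = 0`, then `D_T C_β^* g = 0`, hence
`C_β^* g = T̂^* T̂ C_β^* g = γ_β T̂^* T^β D_{T*} g`. Componentwise this reads
`γ_β T_j^* T^β D_{T*} g = γ_{β-e_j} T^{β-e_j} D_{T*} g`, and applying `T̂` to it yields
`D_{T*} T^β D_{T*} = 0`. Peeling off one `T_j^*` at a time, `D_{T*} T^{*δ} T^η D_{T*} = 0` whenever
`|η| > |δ| + m`, so that `T^{*α} T^δ D_{T*} g ∈ H_c` for `|α| > |δ| + m`.

Hence if `H_c = {0}`, the vectors `T^δ D_{T*} g` span a dense subspace on each vector of which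
`T^{*α}` vanishes for `|α|` large, and `f_k(h) ≤ ‖h‖²` gives `f_k(h) → 0`. Conversely `f_k` is
constantly `‖h‖²` on `H_c`.
-/

open ContinuousLinearMap

section MultiIndex

variable {n : ℕ}

theorem mem_multiIdx {α : Fin n → ℕ} {k : ℕ} : α ∈ multiIdx n k ↔ ∑ i, α i = k := by
  simp only [multiIdx, Finset.mem_filter, Fintype.mem_piFinset, Finset.mem_range,
    and_iff_right_iff_imp]
  rintro rfl i
  exact Nat.lt_succ_of_le (Finset.single_le_sum (fun _ _ => Nat.zero_le _) (Finset.mem_univ i))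

theorem sub_single_add_single {β : Fin n → ℕ} {j : Fin n} (hj : 0 < β j) :
    β - Pi.single j 1 + Pi.single j 1 = β :=
  funext fun i => by
    rcases eq_or_ne i j with rfl | h
    · simp only [Pi.add_apply, Pi.sub_apply, Pi.single_eq_same]; omega
    · simp [h]

theorem sum_add_single (α : Fin n → ℕ) (j : Fin n) :
    ∑ i, (α + Pi.single j 1 : Fin n → ℕ) i = ∑ i, α i + 1 := by
  simp [Finset.sum_add_distrib]

theorem sum_sub_single {β : Fin n → ℕ} {j : Fin n} (hj : 0 < β j) :
    ∑ i, (β - Pi.single j 1 : Fin n → ℕ) i + 1 = ∑ i, β i := by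
  conv_rhs => rw [← sub_single_add_single hj]
  rw [sum_add_single]

theorem multinomial_add_single_mul (α : Fin n → ℕ) (j : Fin n) :
    Nat.multinomial Finset.univ (α + Pi.single j 1) * (α j + 1)
      = Nat.multinomial Finset.univ α * (∑ i, α i + 1) := by
  classical
  have hj : j ∉ Finset.univ.erase j := Finset.notMem_erase j _
  have hrest : ∀ i ∈ Finset.univ.erase j, (α + Pi.single j 1 : Fin n → ℕ) i = α i :=
    fun i hi => by simp [Finset.ne_of_mem_erase hi]
  rw [← Finset.insert_erase (Finset.mem_univ j), Nat.multinomial_insert hj,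
    Nat.multinomial_insert hj, Nat.multinomial_congr hrest, Finset.sum_congr rfl hrest,
    Finset.sum_insert hj]
  simp only [Pi.add_apply, Pi.single_eq_same, add_right_comm (α j) 1]
  linear_combination (Nat.multinomial (Finset.univ.erase j) α) *
    (Nat.add_one_mul_choose_eq (α j + ∑ i ∈ Finset.univ.erase j, α i) (α j)).symm

theorem multinomial_eq_sum_sub_single {β : Fin n → ℕ} (hβ : 0 < ∑ i, β i) :
    Nat.multinomial Finset.univ β
      = ∑ j ∈ Finset.univ.filter (fun j => 0 < β j),
          Nat.multinomial Finset.univ (β - Pi.single j 1) := by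
  refine Nat.eq_of_mul_eq_mul_right hβ ?_
  have hterm : ∀ j ∈ Finset.univ.filter (fun j => 0 < β j),
      Nat.multinomial Finset.univ β * β j
        = Nat.multinomial Finset.univ (β - Pi.single j 1) * ∑ i, β i := by
    intro j hj
    have hj := (Finset.mem_filter.mp hj).2
    have h := multinomial_add_single_mul (β - Pi.single j 1) j
    rwa [sub_single_add_single hj, sum_sub_single hj, Pi.sub_apply, Pi.single_eq_same,
      Nat.sub_add_cancel hj] at h
  rw [Finset.sum_mul, ← Finset.sum_congr rfl hterm, ← Finset.mul_sum,
    Finset.sum_filter_of_ne fun j _ h => Nat.pos_of_ne_zero h]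

theorem sum_multiIdx_succ {M : Type*} [AddCommMonoid M] (F : (Fin n → ℕ) → Fin n → M)
    (k : ℕ) :
    ∑ β ∈ multiIdx n (k + 1), ∑ j ∈ Finset.univ.filter (fun j => 0 < β j),
        F (β - Pi.single j 1) j
      = ∑ α ∈ multiIdx n k, ∑ j, F α j := by
  simp_rw [Finset.sum_filter]
  rw [Finset.sum_comm, Finset.sum_comm (s := multiIdx n k)]
  refine Finset.sum_congr rfl fun j _ => ?_
  rw [← Finset.sum_filter]
  refine Finset.sum_nbij' (· - Pi.single j 1) (· + Pi.single j 1) ?_ ?_ ?_ ?_ (fun _ _ => rfl)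
  · intro β hβ
    simp only [Finset.mem_filter, mem_multiIdx] at hβ ⊢
    have := sum_sub_single hβ.2
    omega
  · intro α hα
    simp only [Finset.mem_filter, mem_multiIdx] at hα ⊢
    exact ⟨by rw [sum_add_single, hα], by simp⟩
  · intro β hβ
    exact sub_single_add_single (Finset.mem_filter.mp hβ).2
  · intro α _
    exact add_tsub_cancel_right α _

end MultiIndex

section Mpow

variable {n : ℕ} {H : Type*} [NormedAddCommGroup H] [InnerProductSpace ℂ H]
  {T : Fin n → H →L[ℂ] H}

theorem pairwise_commute_pow (hcomm : ∀ i j, Commute (T i) (T j)) (α : Fin n → ℕ)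
    (s : Set (Fin n)) : s.Pairwise (Function.onFun Commute fun i => T i ^ α i) :=
  fun i _ j _ _ => (hcomm i j).pow_pow _ _

theorem mpow_eq_noncommProd (hcomm : ∀ i j, Commute (T i) (T j)) (α : Fin n → ℕ) :
    mpow T α =
      Finset.univ.noncommProd (fun i => T i ^ α i) (pairwise_commute_pow hcomm α _) := by
  simp [Finset.noncommProd, mpow, Fin.univ_val_map, Multiset.noncommProd_coe]

@[simp]
theorem mpow_zero : mpow T 0 = 1 := by
  simp [mpow]

theorem mpow_add (hcomm : ∀ i j, Commute (T i) (T j)) (α β : Fin n → ℕ) :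
    mpow T (α + β) = mpow T α * mpow T β := by
  simp only [mpow_eq_noncommProd hcomm, Pi.add_apply, pow_add]
  exact Finset.noncommProd_mul_distrib _ _ _ _ fun i _ j _ _ => (hcomm i j).pow_pow _ _

theorem mpow_single (hcomm : ∀ i j, Commute (T i) (T j)) (j : Fin n) :
    mpow T (Pi.single j 1) = T j := by
  classical
  have hrest : ∀ i ∈ Finset.univ.erase j, T i ^ (Pi.single j 1 : Fin n → ℕ) i = 1 :=
    fun i hi => by simp [Pi.single_eq_of_ne (Finset.ne_of_mem_erase hi)]
  rw [mpow_eq_noncommProd hcomm, ← Finset.noncommProd_erase_mul _ (Finset.mem_univ j) _ _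
    (pairwise_commute_pow hcomm _ _), Finset.noncommProd_eq_pow_card _ _ _ 1 hrest]
  simp

theorem mpow_sub_single_mul (hcomm : ∀ i j, Commute (T i) (T j)) {β : Fin n → ℕ} {j : Fin n}
    (hj : 0 < β j) : mpow T (β - Pi.single j 1) * T j = mpow T β := by
  rw [← mpow_single hcomm j, ← mpow_add hcomm, sub_single_add_single hj]

theorem mul_mpow_sub_single (hcomm : ∀ i j, Commute (T i) (T j)) {β : Fin n → ℕ} {j : Fin n}
    (hj : 0 < β j) : T j * mpow T (β - Pi.single j 1) = mpow T β := by
  rw [← mpow_single hcomm j, ← mpow_add hcomm, add_comm, sub_single_add_single hj]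

end Mpow

section SelfAdjoint

variable {E : Type*} [NormedAddCommGroup E] [InnerProductSpace ℂ E] [CompleteSpace E]
  {A : E →L[ℂ] E}

theorem inner_apply_eq_inner_apply_of_isSelfAdjoint (hA : IsSelfAdjoint A) (x y : E) :
    ⟪A x, y⟫_ℂ = ⟪x, A y⟫_ℂ :=
  hA.isSymmetric x y

theorem apply_eq_zero_of_apply_apply_eq_zero (hA : IsSelfAdjoint A) {x : E}
    (hx : A (A x) = 0) : A x = 0 := by
  rw [← norm_eq_zero, ← sq_eq_zero_iff, apply_norm_sq_eq_inner_adjoint_left,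
    ← star_eq_adjoint, hA.star_eq, ContinuousLinearMap.comp_apply, hx,
    inner_zero_left, map_zero]

end SelfAdjoint

section LevelSum

variable {n : ℕ} {H : Type*} [NormedAddCommGroup H] [InnerProductSpace ℂ H] [CompleteSpace H]
  {T : Fin n → H →L[ℂ] H} {Dstar : H →L[ℂ] H}

theorem sum_norm_sq_star_apply (hDs : IsSelfAdjoint Dstar)
    (hDs2 : Dstar ∘L Dstar = 1 - ∑ i, T i ∘L star (T i)) (u : H) :
    ∑ j, ‖star (T j) u‖ ^ 2 = ‖u‖ ^ 2 - ‖Dstar u‖ ^ 2 := by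
  have hD : ‖Dstar u‖ ^ 2 = RCLike.re ⟪(Dstar ∘L Dstar) u, u⟫_ℂ := by
    rw [apply_norm_sq_eq_inner_adjoint_left, ← star_eq_adjoint, hDs.star_eq]
  have hT (j : Fin n) :
      ‖star (T j) u‖ ^ 2 = RCLike.re ⟪(T j ∘L star (T j)) u, u⟫_ℂ := by
    rw [apply_norm_sq_eq_inner_adjoint_left, ← star_eq_adjoint, star_star]
  simp only [hD, hT, hDs2, sub_apply, sum_apply, one_apply_eq_self, inner_sub_left, sum_inner,
    map_sub, map_sum, inner_self_eq_norm_sq]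
  ring

variable (T) in
def levelSum (h : H) (k : ℕ) : ℝ :=
  ∑ α ∈ multiIdx n k, (Nat.multinomial Finset.univ α : ℝ) * ‖star (mpow T α) h‖ ^ 2

theorem levelSum_nonneg (h : H) (k : ℕ) : 0 ≤ levelSum T h k :=
  Finset.sum_nonneg fun _ _ => by positivity

theorem levelSum_zero (h : H) : levelSum T h 0 = ‖h‖ ^ 2 := by
  have h0 : multiIdx n 0 = {0} := by
    ext α
    simp [mem_multiIdx, funext_iff]
  simp [levelSum, h0, Nat.multinomial]

theorem levelSum_succ (hcomm : ∀ i j, Commute (T i) (T j)) (hDs : IsSelfAdjoint Dstar)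
    (hDs2 : Dstar ∘L Dstar = 1 - ∑ i, T i ∘L star (T i)) (h : H) (k : ℕ) :
    levelSum T h (k + 1) = levelSum T h k
      - ∑ α ∈ multiIdx n k,
          (Nat.multinomial Finset.univ α : ℝ) * ‖Dstar (star (mpow T α) h)‖ ^ 2 := by
  calc levelSum T h (k + 1)
      = ∑ β ∈ multiIdx n (k + 1), ∑ j ∈ Finset.univ.filter (fun j => 0 < β j),
          (Nat.multinomial Finset.univ (β - Pi.single j 1) : ℝ)
            * ‖star (T j) (star (mpow T (β - Pi.single j 1)) h)‖ ^ 2 := by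
        refine Finset.sum_congr rfl fun β hβ => ?_
        rw [multinomial_eq_sum_sub_single (by rw [mem_multiIdx.mp hβ]; omega), Nat.cast_sum,
          Finset.sum_mul]
        refine Finset.sum_congr rfl fun j hj => ?_
        rw [← mpow_sub_single_mul hcomm (Finset.mem_filter.mp hj).2, star_mul, mul_apply_eq_comp]
    _ = ∑ α ∈ multiIdx n k, (Nat.multinomial Finset.univ α : ℝ)
          * ∑ j, ‖star (T j) (star (mpow T α) h)‖ ^ 2 := by
        rw [sum_multiIdx_succ (fun α j => (Nat.multinomial Finset.univ α : ℝ)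
          * ‖star (T j) (star (mpow T α) h)‖ ^ 2)]
        simp only [Finset.mul_sum]
    _ = _ := by
        simp only [sum_norm_sq_star_apply hDs hDs2, mul_sub, Finset.sum_sub_distrib, levelSum]

theorem levelSum_le (hcomm : ∀ i j, Commute (T i) (T j)) (hDs : IsSelfAdjoint Dstar)
    (hDs2 : Dstar ∘L Dstar = 1 - ∑ i, T i ∘L star (T i)) (h : H) (k : ℕ) :
    levelSum T h k ≤ ‖h‖ ^ 2 := by
  induction k with
  | zero => rw [levelSum_zero]
  | succ k ih =>
    rw [levelSum_succ hcomm hDs hDs2]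
    have hdefect : 0 ≤ ∑ α ∈ multiIdx n k,
        (Nat.multinomial Finset.univ α : ℝ) * ‖Dstar (star (mpow T α) h)‖ ^ 2 :=
      Finset.sum_nonneg fun _ _ => by positivity
    linarith

theorem mem_Hc_of_forall_Dstar_star_mpow_eq_zero (hcomm : ∀ i j, Commute (T i) (T j))
    (hDs : IsSelfAdjoint Dstar) (hDs2 : Dstar ∘L Dstar = 1 - ∑ i, T i ∘L star (T i)) {h : H}
    (hz : ∀ α, Dstar (star (mpow T α) h) = 0) : h ∈ Hc T := by
  suffices ∀ k, levelSum T h k = ‖h‖ ^ 2 from this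
  intro k
  induction k with
  | zero => exact levelSum_zero h
  | succ k ih => simp [levelSum_succ hcomm hDs hDs2, hz, ih]

end LevelSum

section RowOperator

variable {n : ℕ} {E F : Type*} [NormedAddCommGroup E] [InnerProductSpace ℂ E]
  [NormedAddCommGroup F] [InnerProductSpace ℂ F] (T : Fin n → E →L[ℂ] F)

theorem rowOp_apply (x : PiLp 2 fun _ : Fin n => E) : rowOp T x = ∑ i, T i (x i) := by
  simp [rowOp]

variable [CompleteSpace E] [CompleteSpace F]

theorem adjoint_rowOp_apply (y : F) :
    adjoint (rowOp T) y = WithLp.toLp 2 fun i => adjoint (T i) y := by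
  refine ext_inner_right ℂ fun x => ?_
  simp [adjoint_inner_left, rowOp_apply, PiLp.inner_apply, inner_sum]

theorem rowOp_comp_adjoint :
    rowOp T ∘L adjoint (rowOp T) = ∑ i, T i ∘L adjoint (T i) := by
  ext y
  simp [rowOp_apply, adjoint_rowOp_apply]

end RowOperator

section CharCoeff

variable {n : ℕ} {H : Type*} [NormedAddCommGroup H] [InnerProductSpace ℂ H]
  {T : Fin n → H →L[ℂ] H} {Dstar : H →L[ℂ] H}
  {D : PiLp 2 (fun _ : Fin n => H) →L[ℂ] PiLp 2 (fun _ : Fin n => H)}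

variable (T Dstar) in
/-- `C_β^* g`, where `θ_{T,β} = C_β D_T` with
`C_β y = ∑_{β_j ≥ 1} γ_{β-e_j} D_{T*} T^{*(β-e_j)} y_j`. -/
def charCoeffVec (β : Fin n → ℕ) (g : H) : PiLp 2 (fun _ : Fin n => H) :=
  WithLp.toLp 2 fun j =>
    if 0 < β j then
      (Nat.multinomial Finset.univ (β - Pi.single j 1) : ℂ) •
        mpow T (β - Pi.single j 1) (Dstar g)
    else 0

theorem rowOp_charCoeffVec (hcomm : ∀ i j, Commute (T i) (T j)) {β : Fin n → ℕ}
    (hβ : 0 < ∑ i, β i) (g : H) :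
    rowOp T (charCoeffVec T Dstar β g)
      = (Nat.multinomial Finset.univ β : ℂ) • mpow T β (Dstar g) := by
  rw [rowOp_apply, multinomial_eq_sum_sub_single hβ, Nat.cast_sum, Finset.sum_smul,
    ← Finset.sum_filter_add_sum_filter_not Finset.univ (fun j => 0 < β j)]
  have hzero : ∀ j ∈ Finset.univ.filter (fun j => ¬ 0 < β j),
      T j (charCoeffVec T Dstar β g j) = 0 :=
    fun j hj => by simp [charCoeffVec, (Finset.mem_filter.mp hj).2]
  rw [Finset.sum_eq_zero hzero, add_zero]
  refine Finset.sum_congr rfl fun j hj => ?_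
  have hj := (Finset.mem_filter.mp hj).2
  simp only [charCoeffVec, PiLp.toLp_apply, if_pos hj, map_smul]
  rw [← mul_apply_eq_comp, mul_mpow_sub_single hcomm hj]

variable [CompleteSpace H]

theorem inner_charCoeffVec (hDs : IsSelfAdjoint Dstar) (β : Fin n → ℕ) (g : H)
    (y : PiLp 2 (fun _ : Fin n => H)) :
    ⟪charCoeffVec T Dstar β g, D y⟫_ℂ = ⟪g, charCoeff T Dstar D β y⟫_ℂ := by
  simp only [charCoeffVec, charCoeff, PiLp.inner_apply, sum_apply, inner_sum,
    Finset.sum_filter]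
  refine Finset.sum_congr rfl fun j _ => ?_
  split_ifs
  · rw [smul_apply, inner_smul_left, inner_smul_right, Complex.conj_natCast]
    simp only [ContinuousLinearMap.comp_apply, PiLp.proj_apply]
    rw [← inner_apply_eq_inner_apply_of_isSelfAdjoint hDs, star_eq_adjoint, adjoint_inner_right]
  · simp

theorem charCoeffVec_eq_smul_adjoint_rowOp (hcomm : ∀ i j, Commute (T i) (T j))
    (hDs : IsSelfAdjoint Dstar) (hD : IsSelfAdjoint D)
    (hD2 : D ∘L D = 1 - adjoint (rowOp T) ∘L rowOp T) {β : Fin n → ℕ}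
    (hβ : 0 < ∑ i, β i) (hθ : charCoeff T Dstar D β = 0) (g : H) :
    charCoeffVec T Dstar β g
      = (Nat.multinomial Finset.univ β : ℂ) • adjoint (rowOp T) (mpow T β (Dstar g)) := by
  have hDv : D (charCoeffVec T Dstar β g) = 0 := by
    refine ext_inner_right ℂ fun y => ?_
    rw [inner_apply_eq_inner_apply_of_isSelfAdjoint hD, inner_charCoeffVec hDs, hθ, zero_apply,
      inner_zero_right, inner_zero_left]
  have h := congrArg (· (charCoeffVec T Dstar β g)) hD2
  simp only [ContinuousLinearMap.comp_apply, hDv, map_zero, sub_apply, one_apply_eq_self] at h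
  rw [sub_eq_zero.mp h.symm, rowOp_charCoeffVec hcomm hβ, map_smul]

theorem multinomial_smul_star_apply_mpow (hcomm : ∀ i j, Commute (T i) (T j))
    (hDs : IsSelfAdjoint Dstar) (hD : IsSelfAdjoint D)
    (hD2 : D ∘L D = 1 - adjoint (rowOp T) ∘L rowOp T) {β : Fin n → ℕ}
    (hβ : 0 < ∑ i, β i) (hθ : charCoeff T Dstar D β = 0) (j : Fin n) (g : H) :
    (Nat.multinomial Finset.univ β : ℂ) • star (T j) (mpow T β (Dstar g))
      = if 0 < β j then
          (Nat.multinomial Finset.univ (β - Pi.single j 1) : ℂ) •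
            mpow T (β - Pi.single j 1) (Dstar g)
        else 0 := by
  have h := congrArg (· j) (charCoeffVec_eq_smul_adjoint_rowOp hcomm hDs hD hD2 hβ hθ g)
  simpa [charCoeffVec, adjoint_rowOp_apply, star_eq_adjoint] using h.symm

theorem Dstar_mpow_Dstar_eq_zero (hcomm : ∀ i j, Commute (T i) (T j))
    (hDs : IsSelfAdjoint Dstar) (hDs2 : Dstar ∘L Dstar = 1 - ∑ i, T i ∘L star (T i))
    (hD : IsSelfAdjoint D) (hD2 : D ∘L D = 1 - adjoint (rowOp T) ∘L rowOp T)
    {β : Fin n → ℕ} (hβ : 0 < ∑ i, β i) (hθ : charCoeff T Dstar D β = 0) (g : H) :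
    Dstar (mpow T β (Dstar g)) = 0 := by
  set v := mpow T β (Dstar g)
  have hM : (Nat.multinomial Finset.univ β : ℂ) ≠ 0 := by
    exact_mod_cast (Nat.multinomial_pos _ _).ne'
  have hTT : ∑ i, T i ∘L adjoint (T i) = 1 - Dstar ∘L Dstar := by
    simp [hDs2, star_eq_adjoint]
  have h : (Nat.multinomial Finset.univ β : ℂ) • (v - Dstar (Dstar v))
      = (Nat.multinomial Finset.univ β : ℂ) • v :=
    calc _ = (Nat.multinomial Finset.univ β : ℂ) • (rowOp T ∘L adjoint (rowOp T)) v := by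
          rw [rowOp_comp_adjoint, hTT]; rfl
      _ = rowOp T (charCoeffVec T Dstar β g) := by
          rw [charCoeffVec_eq_smul_adjoint_rowOp hcomm hDs hD hD2 hβ hθ, map_smul]; rfl
      _ = _ := rowOp_charCoeffVec hcomm hβ g
  refine apply_eq_zero_of_apply_apply_eq_zero hDs ?_
  simpa using smul_right_injective H hM h

end CharCoeff

section PolynomialCharacteristicFunction

variable {n : ℕ} {H : Type*} [NormedAddCommGroup H] [InnerProductSpace ℂ H] [CompleteSpace H]
  {T : Fin n → H →L[ℂ] H} {Dstar : H →L[ℂ] H}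
  {D : PiLp 2 (fun _ : Fin n => H) →L[ℂ] PiLp 2 (fun _ : Fin n => H)} {m : ℕ}

theorem Dstar_star_mpow_mpow_Dstar_eq_zero (hcomm : ∀ i j, Commute (T i) (T j))
    (hDs : IsSelfAdjoint Dstar) (hDs2 : Dstar ∘L Dstar = 1 - ∑ i, T i ∘L star (T i))
    (hD : IsSelfAdjoint D) (hD2 : D ∘L D = 1 - adjoint (rowOp T) ∘L rowOp T)
    (hpoly : ∀ β : Fin n → ℕ, m < ∑ i, β i → charCoeff T Dstar D β = 0)
    {δ η : Fin n → ℕ} (hδη : ∑ i, δ i + m < ∑ i, η i) (g : H) :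
    Dstar (star (mpow T δ) (mpow T η (Dstar g))) = 0 := by
  induction hN : ∑ i, δ i generalizing δ η with
  | zero =>
    obtain rfl : δ = 0 := funext fun i => Finset.sum_eq_zero_iff.mp hN i (Finset.mem_univ i)
    simpa using Dstar_mpow_Dstar_eq_zero hcomm hDs hDs2 hD hD2 (by omega) (hpoly η (by omega)) g
  | succ N ih =>
    obtain ⟨j, hj⟩ : ∃ j, 0 < δ j := by
      by_contra! h
      simp [fun i => Nat.le_zero.mp (h i)] at hN
    have hM : (Nat.multinomial Finset.univ η : ℂ) ≠ 0 := by
      exact_mod_cast (Nat.multinomial_pos _ _).ne'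
    rw [← mul_mpow_sub_single hcomm hj, star_mul, mul_apply_eq_comp]
    refine smul_right_injective H hM ?_
    beta_reduce
    rw [smul_zero, ← map_smul, ← map_smul,
      multinomial_smul_star_apply_mpow hcomm hDs hD hD2 (by omega) (hpoly η (by omega)) j g]
    split_ifs with hηj
    · have := sum_sub_single hj
      have := sum_sub_single hηj
      rw [map_smul, map_smul, ih (by omega) (by omega), smul_zero]
    · simp

theorem star_mpow_mpow_Dstar_mem_Hc (hcomm : ∀ i j, Commute (T i) (T j))
    (hDs : IsSelfAdjoint Dstar) (hDs2 : Dstar ∘L Dstar = 1 - ∑ i, T i ∘L star (T i))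
    (hD : IsSelfAdjoint D) (hD2 : D ∘L D = 1 - adjoint (rowOp T) ∘L rowOp T)
    (hpoly : ∀ β : Fin n → ℕ, m < ∑ i, β i → charCoeff T Dstar D β = 0)
    {δ α : Fin n → ℕ} (hδα : ∑ i, δ i + m < ∑ i, α i) (g : H) :
    star (mpow T α) (mpow T δ (Dstar g)) ∈ Hc T := by
  refine mem_Hc_of_forall_Dstar_star_mpow_eq_zero hcomm hDs hDs2 fun ρ => ?_
  -- `D_{T*} T^{*(α+ρ)} T^δ D_{T*}` is the adjoint of `D_{T*} T^{*δ} T^{α+ρ} D_{T*} = 0`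
  have hop : Dstar * star (mpow T δ) * mpow T (α + ρ) * Dstar = 0 := by
    ext x
    refine Dstar_star_mpow_mpow_Dstar_eq_zero hcomm hDs hDs2 hD hD2 hpoly ?_ x
    simp only [Pi.add_apply, Finset.sum_add_distrib]
    omega
  have h := congrArg (fun A : H →L[ℂ] H => star A g) hop
  simpa [star_mul, hDs.star_eq, mul_assoc, mpow_add hcomm] using h

end PolynomialCharacteristicFunction

section Purity

variable {n : ℕ} {H : Type*} [NormedAddCommGroup H] [InnerProductSpace ℂ H] [CompleteSpace H]
  {T : Fin n → H →L[ℂ] H} {Dstar : H →L[ℂ] H}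

theorem Hc_eq_singleton_zero_of_forall_tendsto
    (hpure : ∀ h : H, Filter.Tendsto (levelSum T h) Filter.atTop (nhds 0)) : Hc T = {0} := by
  ext x
  refine ⟨fun hx => ?_, fun hx => ?_⟩
  · have hconst : levelSum T x = fun _ => ‖x‖ ^ 2 := funext hx
    have h := tendsto_nhds_unique tendsto_const_nhds (hconst ▸ hpure x)
    simpa using h
  · rw [Set.mem_singleton_iff.mp hx]
    intro k
    simp

theorem rangeSpanAll_eq_top (hcomm : ∀ i j, Commute (T i) (T j)) (hDs : IsSelfAdjoint Dstar)
    (hDs2 : Dstar ∘L Dstar = 1 - ∑ i, T i ∘L star (T i)) (hHc : Hc T = {0}) :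
    rangeSpanAll T Dstar = ⊤ := by
  rw [rangeSpanAll, Submodule.topologicalClosure_eq_top_iff, Submodule.eq_bot_iff]
  intro x hx
  have hz : ∀ α, Dstar (star (mpow T α) x) = 0 := fun α => ext_inner_left ℂ fun g => by
    have h := (Submodule.mem_orthogonal _ x).mp hx _ (Submodule.subset_span ⟨α, g, rfl⟩)
    rwa [inner_zero_right, ← inner_apply_eq_inner_apply_of_isSelfAdjoint hDs, star_eq_adjoint,
      adjoint_inner_right]
  simpa [hHc] using mem_Hc_of_forall_Dstar_star_mpow_eq_zero hcomm hDs hDs2 hz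

theorem exists_forall_star_mpow_eq_zero_of_mem_span (hcomm : ∀ i j, Commute (T i) (T j))
    (hDs : IsSelfAdjoint Dstar) (hDs2 : Dstar ∘L Dstar = 1 - ∑ i, T i ∘L star (T i))
    {D : PiLp 2 (fun _ : Fin n => H) →L[ℂ] PiLp 2 (fun _ : Fin n => H)}
    (hD : IsSelfAdjoint D) (hD2 : D ∘L D = 1 - adjoint (rowOp T) ∘L rowOp T)
    {m : ℕ} (hpoly : ∀ β : Fin n → ℕ, m < ∑ i, β i → charCoeff T Dstar D β = 0)
    (hHc : Hc T = {0}) {v : H}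
    (hv : v ∈
      Submodule.span ℂ {x | ∃ (α : Fin n → ℕ) (g : H), x = mpow T α (Dstar g)}) :
    ∃ K, ∀ α : Fin n → ℕ, K ≤ ∑ i, α i → star (mpow T α) v = 0 := by
  induction hv using Submodule.span_induction with
  | mem x hx =>
    obtain ⟨δ, g, rfl⟩ := hx
    refine ⟨∑ i, δ i + m + 1, fun α hα => ?_⟩
    simpa [hHc] using star_mpow_mpow_Dstar_mem_Hc hcomm hDs hDs2 hD hD2 hpoly (by omega) g
  | zero => exact ⟨0, fun _ _ => map_zero _⟩
  | add x y _ _ hx hy =>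
    obtain ⟨K, hK⟩ := hx
    obtain ⟨L, hL⟩ := hy
    exact ⟨max K L, fun α hα => by
      rw [map_add, hK α (le_of_max_le_left hα), hL α (le_of_max_le_right hα), add_zero]⟩
  | smul c x _ hx =>
    obtain ⟨K, hK⟩ := hx
    exact ⟨K, fun α hα => by rw [map_smul, hK α hα, smul_zero]⟩

theorem tendsto_levelSum_zero_of_mem_closure (hcomm : ∀ i j, Commute (T i) (T j))
    (hDs : IsSelfAdjoint Dstar) (hDs2 : Dstar ∘L Dstar = 1 - ∑ i, T i ∘L star (T i)) {h : H}
    (hh : h ∈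
      closure {v | ∃ K, ∀ α : Fin n → ℕ, K ≤ ∑ i, α i → star (mpow T α) v = 0}) :
    Filter.Tendsto (levelSum T h) Filter.atTop (nhds 0) := by
  rw [Metric.tendsto_atTop]
  intro ε hε
  obtain ⟨v, ⟨K, hK⟩, hv⟩ := Metric.mem_closure_iff.mp hh (√ε) (Real.sqrt_pos.mpr hε)
  refine ⟨K, fun k hk => ?_⟩
  have heq : levelSum T h k = levelSum T (h - v) k := Finset.sum_congr rfl fun α hα => by
    rw [map_sub, hK α (mem_multiIdx.mp hα ▸ hk), sub_zero]
  rw [Real.dist_eq, sub_zero, abs_of_nonneg (levelSum_nonneg h k), heq]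
  calc levelSum T (h - v) k ≤ ‖h - v‖ ^ 2 := levelSum_le hcomm hDs hDs2 _ k
    _ < √ε ^ 2 := by gcongr; rwa [← dist_eq_norm]
    _ = ε := Real.sq_sqrt hε.le

end Purity

theorem statement_16_general {n : ℕ} {H : Type*} [NormedAddCommGroup H] [InnerProductSpace ℂ H]
    [CompleteSpace H]
    (T : Fin n → H →L[ℂ] H) (m : ℕ)
    (hcomm : ∀ i j, Commute (T i) (T j))
    (Dstar : H →L[ℂ] H) (hD1 : Dstar.IsPositive)
    (hD2 : Dstar ∘L Dstar = 1 - ∑ i, T i ∘L star (T i))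
    (D : PiLp 2 (fun _ : Fin n => H) →L[ℂ] PiLp 2 (fun _ : Fin n => H))
    (hDT1 : D.IsPositive)
    (hDT2 : D ∘L D = 1 - (ContinuousLinearMap.adjoint (rowOp T)) ∘L rowOp T)
    (hpoly : ∀ β : Fin n → ℕ, m < ∑ i, β i → charCoeff T Dstar D β = 0) :
    (∀ h : H, Filter.Tendsto
        (fun k : ℕ => ∑ α ∈ multiIdx n k,
          (Nat.multinomial Finset.univ α : ℝ) * ‖star (mpow T α) h‖ ^ 2)
        Filter.atTop (nhds 0))
      ↔ Hc T = {0} := by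
  refine ⟨Hc_eq_singleton_zero_of_forall_tendsto, fun hHc h => ?_⟩
  have hdense : h ∈ (rangeSpanAll T Dstar : Set H) := by
    rw [rangeSpanAll_eq_top hcomm hD1.isSelfAdjoint hD2 hHc]
    trivial
  refine tendsto_levelSum_zero_of_mem_closure hcomm hD1.isSelfAdjoint hD2 (closure_mono ?_ hdense)
  exact fun v hv => exists_forall_star_mpow_eq_zero_of_mem_span hcomm hD1.isSelfAdjoint hD2
    hDT1.isSelfAdjoint hDT2 hpoly hHc hv

theorem statement_16 {n : ℕ} {H : Type*} [NormedAddCommGroup H] [InnerProductSpace ℂ H]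
    [CompleteSpace H]
    (T : Fin n → H →L[ℂ] H) (m : ℕ)
    (hcomm : ∀ i j, Commute (T i) (T j))
    (hrow : ((1 : H →L[ℂ] H) - ∑ i, T i ∘L star (T i)).IsPositive)
    (Dstar : H →L[ℂ] H) (hD1 : Dstar.IsPositive)
    (hD2 : Dstar ∘L Dstar = 1 - ∑ i, T i ∘L star (T i))
    (D : PiLp 2 (fun _ : Fin n => H) →L[ℂ] PiLp 2 (fun _ : Fin n => H))
    (hDT1 : D.IsPositive)
    (hDT2 : D ∘L D = 1 - (ContinuousLinearMap.adjoint (rowOp T)) ∘L rowOp T)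
    (hpoly : ∀ β : Fin n → ℕ, m < ∑ i, β i → charCoeff T Dstar D β = 0) :
    (∀ h : H, Filter.Tendsto
        (fun k : ℕ => ∑ α ∈ multiIdx n k,
          (Nat.multinomial Finset.univ α : ℝ) * ‖star (mpow T α) h‖ ^ 2)
        Filter.atTop (nhds 0))
      ↔ Hc T = {0} :=
  statement_16_general T m hcomm Dstar hD1 hD2 D hDT1 hDT2 hpoly

end RowContr
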